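/- arXiv:0812.0836 — 5 statements merged into one kernel-verified Lean document; each statement's English description precedes it below -/
import Mathlib

section
/- Every uncountable analytic subset of ℝ contains a Cantor set that is linearly independent over ℚ. -/
/-
An uncountable analytic set is the range of a continuous `f : ℕ^ℕ → ℝ`. By second countability,
the points of `ℕ^ℕ` having a neighbourhood with countable image have countable image altogether,
so every set with uncountable image contains two points with distinct images all of whose
neighbourhoods still have uncountable image. Splitting repeatedly around such points gives a
Cantor scheme whose induced map `ψ : 2^ℕ → ℕ^ℕ` is continuous with `f ∘ ψ` injective, and the
range of `f ∘ ψ` is a nonempty compact perfect set `P ⊆ A`.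

Inside `P` we build a second Cantor scheme of perfect sets level by level (Mycielski): after
splitting every set of level `n`, the whole level is shrunk so that no nonzero integer relation
with coefficients bounded by `n` holds between points chosen from the sets of the level. Moving
one coordinate with nonzero coefficient shows that each relation fails at some point of the
product of the sets, hence on a product of small perfect neighbourhoods of that point. Finitely many distinct branches are separated at some level, so the
induced map is `ℚ`-linearly independent, and a `ℚ`-linearly independent subset of `ℝ` contains
no two rationals, hence has empty interior.
-/

def IsCantorSet (K : Set ℝ) : Prop :=
  K.Nonempty ∧ IsCompact K ∧ interior K = ∅ ∧ ∀ x ∈ K, AccPt x (Filter.principal K)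

open Set Filter Topology Function Metric PiNat CantorScheme
open scoped ENNReal

theorem Preperfect.nontrivial {α : Type*} [TopologicalSpace α] {C : Set α} (hC : Preperfect C)
    (hne : C.Nonempty) : C.Nontrivial := by
  obtain ⟨x, hx⟩ := hne
  obtain ⟨y, ⟨-, hy⟩, hyx⟩ := preperfect_iff_nhds.1 hC x hx univ univ_mem
  exact ⟨y, hy, x, hx, hyx⟩

theorem PiNat.eventually_injOn_res {α : Type*} (s : Finset (ℕ → α)) :
    ∀ᶠ n in atTop, InjOn (res · n) (s : Set (ℕ → α)) := by
  have h : ∀ x ∈ s, ∀ y ∈ s, ∀ᶠ n in atTop, res x n = res y n → x = y := by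
    intro x _ y _
    by_cases hxy : x = y
    · exact Eventually.of_forall fun _ _ => hxy
    · exact (eventually_gt_atTop (firstDiff x y)).mono fun n hn hres =>
        absurd (res_eq_res.1 hres hn) (apply_firstDiff_ne hxy)
  filter_upwards [(eventually_all_finset s).2 fun x hx => (eventually_all_finset s).2 (h x hx)]
    with n hn x hx y hy
  exact hn x hx y hy

namespace CantorScheme

variable {β α : Type*} {A : List β → Set α}

theorem Disjoint.injective_of_forall_mem (hA : CantorScheme.Disjoint A) {φ : (ℕ → β) → α}
    (hφ : ∀ x n, φ x ∈ A (res x n)) : Injective φ := by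
  intro x y hxy
  by_contra hne
  have hres : res x (firstDiff x y) = res y (firstDiff x y) :=
    res_eq_res.2 fun _ hm => apply_eq_of_lt_firstDiff hm
  refine (hA _ (apply_firstDiff_ne hne)).ne_of_mem (hφ x (firstDiff x y + 1)) ?_ hxy
  rw [hres]
  exact hφ y (firstDiff x y + 1)

theorem vanishingDiam_of_ediam_le [PseudoMetricSpace α]
    (h : ∀ l, ediam (A l) ≤ (l.length : ℝ≥0∞)⁻¹) : VanishingDiam A := fun x =>
  tendsto_of_tendsto_of_tendsto_of_le_of_le tendsto_const_nhds ENNReal.tendsto_inv_nat_nhds_zero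
    (fun _ => bot_le) fun n => by simpa using h (res x n)

theorem exists_continuous_forall_mem [TopologicalSpace β] [DiscreteTopology β]
    [PseudoMetricSpace α] [CompleteSpace α] (hanti : CantorScheme.Antitone A)
    (hclosed : ∀ l, IsClosed (A l)) (hne : ∀ l, (A l).Nonempty) (hdiam : VanishingDiam A) :
    ∃ g : (ℕ → β) → α, Continuous g ∧ ∀ x n, g x ∈ A (res x n) := by
  have hdom := (hanti.closureAntitone hclosed).map_of_vanishingDiam hdiam hne
  exact ⟨fun x => (inducedMap A).2 ⟨x, hdom ▸ mem_univ x⟩,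
    hdiam.map_continuous.comp (by fun_prop), fun x n => map_mem _ n⟩

end CantorScheme

theorem preperfect_range_of_injective {α : Type*} [TopologicalSpace α] {φ : (ℕ → Bool) → α}
    (hφ : Continuous φ) (hinj : Injective φ) : Preperfect (range φ) := by
  rintro _ ⟨a, rfl⟩
  have hflip : Tendsto (fun n => update a n (!a n)) atTop (𝓝 a) :=
    tendsto_pi_nhds.2 fun i => tendsto_const_nhds.congr' <|
      (eventually_gt_atTop i).mono fun n hn => (update_of_ne hn.ne _ _).symm
  exact accPt_iff_frequently.2 <| ((hφ.tendsto a).comp hflip).frequently <|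
    Frequently.of_forall fun n => ⟨hinj.ne fun h => by simpa using congrFun h n, mem_range_self _⟩

theorem interior_eq_empty_of_linearIndepOn {K : Set ℝ} (hK : LinearIndepOn ℚ id K) :
    interior K = ∅ := by
  refine eq_empty_of_forall_notMem fun x hx => ?_
  obtain ⟨l, u, hxlu, hsub⟩ := mem_nhds_iff_exists_Ioo_subset.1 (mem_interior_iff_mem_nhds.1 hx)
  obtain ⟨q₂, hxq₂, hq₂u⟩ := exists_rat_btwn hxlu.2
  obtain ⟨q₁, hxq₁, hq₁q₂⟩ := exists_rat_btwn hxq₂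
  have hpair := (LinearIndepOn.pair_iff id hq₁q₂.ne).1 (hK.mono (pair_subset
    (hsub ⟨hxlu.1.trans hxq₁, hq₁q₂.trans hq₂u⟩) (hsub ⟨hxlu.1.trans hxq₂, hq₂u⟩)))
  obtain ⟨h₂, h₁⟩ := hpair q₂ (-q₁) (by simp [Rat.smul_def, mul_comm])
  rw [neg_eq_zero] at h₁
  exact hq₁q₂.ne (by rw [h₁, h₂])

theorem exists_perfect_subsets_pi_subset {ι α : Type*} [Fintype ι] [MetricSpace α]
    {D : ι → Set α} (hD : ∀ i, Perfect (D i)) {U : Set (ι → α)} (hU : IsOpen U) {x : ι → α}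
    (hxD : x ∈ univ.pi D) (hxU : x ∈ U) :
    ∃ D' : ι → Set α, (∀ i, Perfect (D' i) ∧ (D' i).Nonempty ∧ D' i ⊆ D i) ∧ univ.pi D' ⊆ U := by
  obtain ⟨δ, hδ, hball⟩ := Metric.isOpen_iff.1 hU x hxU
  refine ⟨fun i => closure (ball (x i) (δ / 2) ∩ D i), fun i => ?_, fun y hy => hball ?_⟩
  · obtain ⟨h₁, h₂⟩ := (hD i).closure_nhds_inter (x i) (hxD i (mem_univ i))
      (mem_ball_self (half_pos hδ)) isOpen_ball
    exact ⟨h₁, h₂, (hD i).closed.closure_subset_iff.2 inter_subset_right⟩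
  · have hy' : dist y x ≤ δ / 2 := (dist_pi_le_iff (half_pos hδ).le).2 fun i =>
      closure_minimal (inter_subset_left.trans ball_subset_closedBall) isClosed_closedBall
        (hy i (mem_univ i))
    exact mem_ball.2 (hy'.trans_lt (half_lt_self hδ))

section CondensationPoints

variable {X Y : Type*} [TopologicalSpace X] {f : X → Y} {S : Set X}

theorem countable_image_setOf_exists_countable_image [SecondCountableTopology X] (f : X → Y)
    (S : Set X) : (f '' {x ∈ S | ∃ V ∈ 𝓝 x, (f '' (V ∩ S)).Countable}).Countable := by
  obtain ⟨B, hBc, -, hB⟩ := TopologicalSpace.exists_countable_basis X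
  have hBS : (⋃ b ∈ {b ∈ B | (f '' (b ∩ S)).Countable}, f '' (b ∩ S)).Countable :=
    (hBc.mono (sep_subset B _)).biUnion fun _ hb => hb.2
  refine hBS.mono ?_
  rintro _ ⟨x, ⟨hxS, V, hV, hVc⟩, rfl⟩
  obtain ⟨b, hbB, hxb, hbV⟩ := hB.mem_nhds_iff.1 hV
  exact mem_biUnion ⟨hbB, hVc.mono (image_mono (inter_subset_inter_left S hbV))⟩
    (mem_image_of_mem f ⟨hxb, hxS⟩)

theorem exists_ne_of_not_countable_image [SecondCountableTopology X]
    (hS : ¬(f '' S).Countable) :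
    ∃ y ∈ S, ∃ z ∈ S, f y ≠ f z ∧ (∀ V ∈ 𝓝 y, ¬(f '' (V ∩ S)).Countable) ∧
      ∀ V ∈ 𝓝 z, ¬(f '' (V ∩ S)).Countable := by
  set G := {x ∈ S | ∀ V ∈ 𝓝 x, ¬(f '' (V ∩ S)).Countable}
  have hG : (f '' G).Nontrivial := by
    by_contra hG
    refine hS (((not_nontrivial_iff.1 hG).countable.union
      (countable_image_setOf_exists_countable_image f S)).mono ?_)
    rintro _ ⟨x, hx, rfl⟩
    by_cases h : ∀ V ∈ 𝓝 x, ¬(f '' (V ∩ S)).Countable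
    · exact Or.inl ⟨x, ⟨hx, h⟩, rfl⟩
    · push Not at h
      exact Or.inr ⟨x, ⟨hx, h⟩, rfl⟩
  obtain ⟨_, ⟨y, hy, rfl⟩, _, ⟨z, hz, rfl⟩, hyz⟩ := hG
  exact ⟨y, hy.1, z, hz.1, hyz, hy.2, hz.2⟩

end CondensationPoints

section CondensationScheme

variable {X Y : Type*} [MetricSpace X] [SecondCountableTopology X] [TopologicalSpace Y]
  [T25Space Y] {f : X → Y}

theorem exists_split_of_not_countable_image (hf : Continuous f) {S : Set X}
    (hS : ¬(f '' S).Countable) {ε : ℝ≥0∞} (hε : 0 < ε) :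
    ∃ S' : Bool → Set X, (∀ b, S' b ⊆ S ∧ ¬(f '' S' b).Countable ∧ ediam (S' b) ≤ ε) ∧
      Pairwise (Disjoint on fun b => closure (f '' S' b)) := by
  obtain ⟨y, -, z, -, hyz, hy, hz⟩ := exists_ne_of_not_countable_image hS
  obtain ⟨u, hyu, hu, v, hzv, hv, huv⟩ := exists_open_nhds_disjoint_closure hyz
  set T : X → Set Y → Set X := fun x w => eball x (ε / 2) ∩ f ⁻¹' w ∩ S
  have piece : ∀ x w, f x ∈ w → IsOpen w → (∀ V ∈ 𝓝 x, ¬(f '' (V ∩ S)).Countable) →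
      ¬(f '' T x w).Countable ∧ ediam (T x w) ≤ ε ∧ closure (f '' T x w) ⊆ closure w := by
    intro x w hxw hw hx
    refine ⟨hx _ (inter_mem (eball_mem_nhds x (ENNReal.half_pos hε.ne'))
      ((hw.preimage hf).mem_nhds hxw)), ?_, closure_mono (image_subset_iff.2 fun _ h => h.1.2)⟩
    calc ediam (T x w) ≤ ediam (eball x (ε / 2)) :=
          ediam_mono (inter_subset_left.trans inter_subset_left)
      _ ≤ 2 * (ε / 2) := ediam_eball_le
      _ = ε := ENNReal.mul_div_cancel two_ne_zero ENNReal.ofNat_ne_top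
  obtain ⟨hyc, hyd, hycl⟩ := piece y u hyu hu hy
  obtain ⟨hzc, hzd, hzcl⟩ := piece z v hzv hv hz
  refine ⟨fun b => cond b (T z v) (T y u), fun b => ?_, ?_⟩
  · cases b
    exacts [⟨inter_subset_right, hyc, hyd⟩, ⟨inter_subset_right, hzc, hzd⟩]
  · rintro (_ | _) (_ | _) h
    exacts [absurd rfl h, huv.mono hycl hzcl, (huv.mono hycl hzcl).symm, absurd rfl h]

noncomputable def condensationScheme (hf : Continuous f) (hX : ¬(range f).Countable) :
    List Bool → {S : Set X // ¬(f '' S).Countable}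
  | [] => ⟨univ, by rwa [image_univ]⟩
  | b :: l =>
    have h := exists_split_of_not_countable_image hf (condensationScheme hf hX l).2
      (ε := ((l.length + 1 : ℕ) : ℝ≥0∞)⁻¹) (by simp)
    ⟨h.choose b, (h.choose_spec.1 b).2.1⟩

theorem condensationScheme_cons (hf : Continuous f) (hX : ¬(range f).Countable) (l : List Bool) :
    (∀ b, (condensationScheme hf hX (b :: l)).1 ⊆ (condensationScheme hf hX l).1 ∧
      ediam (condensationScheme hf hX (b :: l)).1 ≤ ((b :: l).length : ℝ≥0∞)⁻¹) ∧
    Pairwise (Disjoint on fun b => closure (f '' (condensationScheme hf hX (b :: l)).1)) :=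
  have h := exists_split_of_not_countable_image hf (condensationScheme hf hX l).2
    (ε := ((l.length + 1 : ℕ) : ℝ≥0∞)⁻¹) (by simp)
  ⟨fun b => ⟨(h.choose_spec.1 b).1, (h.choose_spec.1 b).2.2⟩, h.choose_spec.2⟩

theorem exists_nat_bool_injective_comp_of_not_countable [CompleteSpace X] (hf : Continuous f)
    (hX : ¬(range f).Countable) : ∃ g : (ℕ → Bool) → X, Continuous g ∧ Injective (f ∘ g) := by
  have hS := condensationScheme_cons hf hX
  have hdiam : ∀ l, ediam (closure (condensationScheme hf hX l).1) ≤ (l.length : ℝ≥0∞)⁻¹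
    | [] => by simp
    | b :: l => (ediam_closure _).trans_le ((hS l).1 b).2
  obtain ⟨g, hg, hgS⟩ := exists_continuous_forall_mem
    (A := fun l => closure (condensationScheme hf hX l).1)
    (fun l b => closure_mono ((hS l).1 b).1) (fun _ => isClosed_closure)
    (fun l => (nonempty_iff_ne_empty.2 fun h =>
      (condensationScheme hf hX l).2 (by simp [h])).closure)
    (vanishingDiam_of_ediam_le hdiam)
  exact ⟨g, hg, Disjoint.injective_of_forall_mem
    (A := fun l => closure (f '' (condensationScheme hf hX l).1)) (fun l => (hS l).2)
    fun x n => image_closure_subset_closure_image hf (mem_image_of_mem f (hgS x n))⟩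

end CondensationScheme

theorem MeasureTheory.AnalyticSet.exists_nat_bool_injection_of_not_countable {α : Type*}
    [TopologicalSpace α] [T25Space α] {A : Set α} (hA : AnalyticSet A) (hunc : ¬A.Countable) :
    ∃ φ : (ℕ → Bool) → α, range φ ⊆ A ∧ Continuous φ ∧ Injective φ := by
  obtain ⟨β, _, _, f, hf, rfl⟩ := analyticSet_iff_exists_polishSpace_range.1 hA
  let := TopologicalSpace.upgradeIsCompletelyMetrizable β
  obtain ⟨g, hg, hinj⟩ := exists_nat_bool_injective_comp_of_not_countable hf hunc
  exact ⟨f ∘ g, range_comp_subset_range _ _, hf.comp hg, hinj⟩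

section IntRelations

variable {ι κ : Type*} [Fintype ι] [Fintype κ]

def AvoidsIntRelations (N : ℕ) (C : ι → Set ℝ) : Prop :=
  ∀ c : ι → ℤ, c ≠ 0 → (∀ i, |c i| ≤ N) → ∀ x ∈ univ.pi C, ∑ i, (c i : ℝ) * x i ≠ 0

theorem avoidsIntRelations_zero (C : ι → Set ℝ) : AvoidsIntRelations 0 C :=
  fun _ hc hN => absurd (funext fun i => abs_nonpos_iff.1 (by simpa using hN i)) hc

theorem AvoidsIntRelations.comp_injective {N : ℕ} {C : ι → Set ℝ} (h : AvoidsIntRelations N C)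
    (hne : ∀ i, (C i).Nonempty) {e : κ → ι} (he : Injective e) :
    AvoidsIntRelations N (C ∘ e) := by
  intro c hc hN x hx
  -- extend `c` by zero and `x` by arbitrary points of the `C i` off the range of `e`
  choose x₀ hx₀ using hne
  have hsum : ∑ k, (c k : ℝ) * x k = ∑ i, ((extend e c 0 i : ℤ) : ℝ) * extend e x x₀ i :=
    Fintype.sum_of_injective e he _ _ (fun i hi => by simp [extend_apply' _ _ _ hi])
      fun k => by simp [he.extend_apply]
  rw [hsum]
  refine h _ (fun h0 => hc (funext fun k => by simpa [he.extend_apply] using congrFun h0 (e k)))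
    (fun i => ?_) _ fun i _ => ?_
  · by_cases hi : ∃ k, e k = i
    · obtain ⟨k, rfl⟩ := hi
      simpa [he.extend_apply] using hN k
    · simp [extend_apply' _ _ _ hi]
  · by_cases hi : ∃ k, e k = i
    · obtain ⟨k, rfl⟩ := hi
      simpa [he.extend_apply] using hx k (mem_univ k)
    · simpa [extend_apply' _ _ _ hi] using hx₀ i

theorem exists_mem_pi_sum_mul_ne_zero {D : ι → Set ℝ} (hD : ∀ i, (D i).Nontrivial) {c : ι → ℤ}
    (hc : c ≠ 0) : ∃ x ∈ univ.pi D, ∑ i, (c i : ℝ) * x i ≠ 0 := by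
  classical
  obtain ⟨i₀, hi₀⟩ := Function.ne_iff.1 hc
  choose p hp using fun i => (hD i).nonempty
  by_cases hp0 : ∑ i, (c i : ℝ) * p i = 0
  · obtain ⟨w, hw, hwp⟩ := (hD i₀).exists_ne (p i₀)
    refine ⟨update p i₀ w, fun i _ => ?_, ?_⟩
    · rcases eq_or_ne i i₀ with rfl | hi
      · simpa using hw
      · simpa [update_of_ne hi] using hp i
    · have hdiff : ∑ i, (c i : ℝ) * update p i₀ w i - ∑ i, (c i : ℝ) * p i =
          c i₀ * (w - p i₀) := by
        rw [← Finset.sum_sub_distrib, Finset.sum_eq_single i₀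
          (fun i _ hi => by simp [update_of_ne hi]) (by simp)]
        simp [mul_sub]
      rw [hp0, sub_zero] at hdiff
      rw [hdiff]
      exact mul_ne_zero (Int.cast_ne_zero.2 hi₀) (sub_ne_zero.2 hwp)
  · exact ⟨p, fun i _ => hp i, hp0⟩

theorem exists_perfect_subsets_sum_mul_ne_zero (G : Finset (ι → ℤ)) (hG : (0 : ι → ℤ) ∉ G)
    {D : ι → Set ℝ} (hD : ∀ i, Perfect (D i) ∧ (D i).Nonempty) :
    ∃ D' : ι → Set ℝ, (∀ i, Perfect (D' i) ∧ (D' i).Nonempty ∧ D' i ⊆ D i) ∧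
      ∀ c ∈ G, ∀ x ∈ univ.pi D', ∑ i, (c i : ℝ) * x i ≠ 0 := by
  classical
  induction G using Finset.induction_on generalizing D with
  | empty => exact ⟨D, fun i => ⟨(hD i).1, (hD i).2, subset_rfl⟩, by simp⟩
  | insert c G _ ih =>
    obtain ⟨D₁, hD₁, hD₁G⟩ := ih (fun h => hG (Finset.mem_insert_of_mem h)) hD
    obtain ⟨x, hx, hxc⟩ := exists_mem_pi_sum_mul_ne_zero
      (fun i => (hD₁ i).1.2.nontrivial (hD₁ i).2.1) (fun h => hG (h ▸ Finset.mem_insert_self _ _))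
    obtain ⟨D₂, hD₂, hD₂c⟩ := exists_perfect_subsets_pi_subset (fun i => (hD₁ i).1)
      (isOpen_ne_fun (f := fun y : ι → ℝ => ∑ i, (c i : ℝ) * y i) (by fun_prop)
        continuous_const) hx hxc
    refine ⟨D₂, fun i => ⟨(hD₂ i).1, (hD₂ i).2.1, (hD₂ i).2.2.trans (hD₁ i).2.2⟩, ?_⟩
    intro c' hc' y hy
    rcases Finset.mem_insert.1 hc' with rfl | hc'
    · exact hD₂c hy
    · exact hD₁G c' hc' y fun i _ => (hD₂ i).2.2 (hy i (mem_univ i))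

theorem exists_perfect_subsets_avoidsIntRelations (N : ℕ) {D : ι → Set ℝ}
    (hD : ∀ i, Perfect (D i) ∧ (D i).Nonempty) :
    ∃ D' : ι → Set ℝ, (∀ i, Perfect (D' i) ∧ (D' i).Nonempty ∧ D' i ⊆ D i) ∧
      AvoidsIntRelations N D' := by
  classical
  obtain ⟨D', hD', hG⟩ := exists_perfect_subsets_sum_mul_ne_zero
    ((Fintype.piFinset fun _ => Finset.Icc (-N : ℤ) N).erase 0) (Finset.notMem_erase _ _) hD
  exact ⟨D', hD', fun c hc hN => hG c (Finset.mem_erase.2 ⟨hc, Fintype.mem_piFinset.2 fun i =>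
    Finset.mem_Icc.2 (abs_le.1 (hN i))⟩)⟩

end IntRelations

theorem exists_children_avoidsIntRelations {n : ℕ} {C : List.Vector Bool n → Set ℝ}
    (hC : ∀ t, Perfect (C t) ∧ (C t).Nonempty) {ε : ℝ≥0∞} (hε : 0 < ε) :
    ∃ C' : List.Vector Bool (n + 1) → Set ℝ,
      (∀ t, Perfect (C' t) ∧ (C' t).Nonempty ∧ C' t ⊆ C t.tail ∧ ediam (C' t) ≤ ε) ∧
      AvoidsIntRelations (n + 1) C' := by
  choose C₀ C₁ h₀ h₁ _ using fun t => (hC t).1.small_diam_splitting (hC t).2 hε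
  have hsplit : ∀ t b, Perfect (cond b (C₁ t) (C₀ t)) ∧ (cond b (C₁ t) (C₀ t)).Nonempty ∧
      cond b (C₁ t) (C₀ t) ⊆ C t ∧ ediam (cond b (C₁ t) (C₀ t)) ≤ ε := fun t b => by
    cases b
    exacts [h₀ t, h₁ t]
  obtain ⟨C', hC', hav⟩ := exists_perfect_subsets_avoidsIntRelations (n + 1)
    (D := fun t : List.Vector Bool (n + 1) => cond t.head (C₁ t.tail) (C₀ t.tail))
    fun t => ⟨(hsplit t.tail t.head).1, (hsplit t.tail t.head).2.1⟩
  refine ⟨C', fun t => ⟨(hC' t).1, (hC' t).2.1, (hC' t).2.2.trans (hsplit _ _).2.2.1, ?_⟩, hav⟩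
  exact (ediam_mono (hC' t).2.2).trans (hsplit _ _).2.2.2

theorem linearIndependent_int_of_forall_mem {C : (n : ℕ) → List.Vector Bool n → Set ℝ}
    (hne : ∀ n t, (C n t).Nonempty) (hC : ∀ n, AvoidsIntRelations n (C n))
    {φ : (ℕ → Bool) → ℝ} (hφ : ∀ x n, φ x ∈ C n ⟨res x n, res_length x n⟩) :
    LinearIndependent ℤ φ := by
  rw [linearIndependent_iff']
  intro s g hsum i hi
  by_contra hgi
  -- a level bounding the coefficients at which the branches through `s` have separated
  obtain ⟨n, hgn, hinj⟩ := ((eventually_all_finset s).2 (fun j _ =>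
    (tendsto_natCast_atTop_atTop (R := ℤ)).eventually_ge_atTop |g j|)).and
    (eventually_injOn_res s) |>.exists
  refine (hC n).comp_injective (hne n) (e := fun x : s => ⟨res x.1 n, res_length _ _⟩)
    (fun x y h => Subtype.ext (hinj x.2 y.2 (congrArg Subtype.val h))) (fun x => g x)
    (fun h => hgi (congrFun h ⟨i, hi⟩)) (fun x => hgn x x.2) (fun x => φ x)
    (fun x _ => hφ x n) ?_
  rw [Finset.sum_coe_sort s fun x => (g x : ℝ) * φ x]
  simpa [zsmul_eq_mul] using hsum

section IndependentScheme

variable {P : Set ℝ} (hP : Perfect P) (hPne : P.Nonempty)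

/-- Level `n` is indexed by the binary words of length `n`; the parent of a word is its tail. -/
noncomputable def independentLevel :
    (n : ℕ) → {C : List.Vector Bool n → Set ℝ // ∀ t, Perfect (C t) ∧ (C t).Nonempty}
  | 0 => ⟨fun _ => P, fun _ => ⟨hP, hPne⟩⟩
  | n + 1 =>
    have h := exists_children_avoidsIntRelations (independentLevel n).2
      (ε := ((n + 1 : ℕ) : ℝ≥0∞)⁻¹) (by simp)
    ⟨h.choose, fun t => ⟨(h.choose_spec.1 t).1, (h.choose_spec.1 t).2.1⟩⟩

theorem independentLevel_succ (n : ℕ) :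
    (∀ t, (independentLevel hP hPne (n + 1)).1 t ⊆ (independentLevel hP hPne n).1 t.tail ∧
      ediam ((independentLevel hP hPne (n + 1)).1 t) ≤ ((n + 1 : ℕ) : ℝ≥0∞)⁻¹) ∧
    AvoidsIntRelations (n + 1) (independentLevel hP hPne (n + 1)).1 :=
  have h := exists_children_avoidsIntRelations (independentLevel hP hPne n).2
    (ε := ((n + 1 : ℕ) : ℝ≥0∞)⁻¹) (by simp)
  ⟨fun t => ⟨(h.choose_spec.1 t).2.2.1, (h.choose_spec.1 t).2.2.2⟩, h.choose_spec.2⟩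

theorem avoidsIntRelations_independentLevel :
    ∀ n, AvoidsIntRelations n (independentLevel hP hPne n).1
  | 0 => avoidsIntRelations_zero _
  | n + 1 => (independentLevel_succ hP hPne n).2

def independentScheme (l : List Bool) : Set ℝ := (independentLevel hP hPne l.length).1 ⟨l, rfl⟩

theorem independentScheme_eq {l : List Bool} {n : ℕ} (h : l.length = n) :
    independentScheme hP hPne l = (independentLevel hP hPne n).1 ⟨l, h⟩ := by
  subst h
  rfl

end IndependentScheme

theorem Perfect.exists_nat_bool_linearIndependent {P : Set ℝ} (hP : Perfect P)
    (hPne : P.Nonempty) :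
    ∃ φ : (ℕ → Bool) → ℝ, range φ ⊆ P ∧ Continuous φ ∧ LinearIndependent ℚ φ := by
  have hdiam : ∀ l, ediam (independentScheme hP hPne l) ≤ (l.length : ℝ≥0∞)⁻¹
    | [] => by simp
    | b :: l => ((independentLevel_succ hP hPne l.length).1 ⟨b :: l, rfl⟩).2
  obtain ⟨φ, hφ, hφD⟩ := exists_continuous_forall_mem (A := independentScheme hP hPne)
    (fun l b => ((independentLevel_succ hP hPne l.length).1 ⟨b :: l, rfl⟩).1)
    (fun l => ((independentLevel hP hPne _).2 _).1.closed)
    (fun l => ((independentLevel hP hPne _).2 _).2) (vanishingDiam_of_ediam_le hdiam)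
  refine ⟨φ, range_subset_iff.2 fun x => hφD x 0, hφ, ?_⟩
  rw [← LinearIndependent.iff_fractionRing ℤ ℚ]
  exact linearIndependent_int_of_forall_mem (fun n t => ((independentLevel hP hPne n).2 t).2)
    (avoidsIntRelations_independentLevel hP hPne)
    fun x n => independentScheme_eq hP hPne (res_length x n) ▸ hφD x n

theorem isCantorSet_range_of_linearIndependent {φ : (ℕ → Bool) → ℝ} (hφ : Continuous φ)
    (hli : LinearIndependent ℚ φ) : IsCantorSet (range φ) :=
  ⟨range_nonempty φ, isCompact_range hφ,
    interior_eq_empty_of_linearIndepOn ((linearIndepOn_id_range_iff hli.injective).2 hli),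
    preperfect_range_of_injective hφ hli.injective⟩

/-- every uncountable analytic subset of `ℝ` contains a
`ℚ`-linearly independent Cantor set. -/
theorem stmt7 (A : Set ℝ) (hA : MeasureTheory.AnalyticSet A) (hunc : ¬ A.Countable) :
    ∃ K : Set ℝ, K ⊆ A ∧ IsCantorSet K ∧ LinearIndependent ℚ (fun k : K => (k : ℝ)) := by
  obtain ⟨ψ, hψA, hψ, hψinj⟩ := hA.exists_nat_bool_injection_of_not_countable hunc
  have hP : Perfect (range ψ) :=
    ⟨(isCompact_range hψ).isClosed, preperfect_range_of_injective hψ hψinj⟩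
  obtain ⟨φ, hφψ, hφ, hli⟩ := hP.exists_nat_bool_linearIndependent (range_nonempty ψ)
  exact ⟨range φ, hφψ.trans hψA, isCantorSet_range_of_linearIndependent hφ hli,
    (linearIndepOn_id_range_iff hli.injective).2 hli⟩
end

section
/- Let E ⊆ ℝ be a Cantor set and let M be the set of midpoints of the bounded connected components of ℝ \ E. Then M = {r ∈ ℝ : ∃ ε > 0, E ∩ [r−ε, r+ε] = {r−ε, r+ε}} and E equals the frontier Fr(M) = Cl(M) \ M of M. -/
/-- The set of midpoints of the bounded connected components of `ℝ \ E`: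
a bounded component of the complement of the closed set `E` is an interval
`(a,b)` with `a, b ∈ E` and `(a,b) ∩ E = ∅`. -/
def midSet (E : Set ℝ) : Set ℝ :=
  {m : ℝ | ∃ a b : ℝ, a < b ∧ a ∈ E ∧ b ∈ E ∧ Set.Ioo a b ⊆ Eᶜ ∧ m = (a + b) / 2}

open Set

variable {E : Set ℝ}

lemma inter_Icc_eq_pair_iff {a b : ℝ} (hab : a ≤ b) :
    E ∩ Icc a b = {a, b} ↔ a ∈ E ∧ b ∈ E ∧ Ioo a b ⊆ Eᶜ := by
  constructor
  · intro h
    have hpair : ∀ x ∈ ({a, b} : Set ℝ), x ∈ E := fun x hx => (h ▸ hx : x ∈ E ∩ Icc a b).1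
    refine ⟨hpair a (mem_insert a _), hpair b (mem_insert_of_mem a rfl), fun x hx hxE => ?_⟩
    have : x ∈ ({a, b} : Set ℝ) := h ▸ ⟨hxE, Ioo_subset_Icc_self hx⟩
    rcases this with rfl | rfl
    exacts [hx.1.ne rfl, hx.2.ne rfl]
  · rintro ⟨ha, hb, hgap⟩
    ext x
    refine ⟨fun ⟨hxE, hx⟩ => ?_, ?_⟩
    · rw [← Icc_sdiff_Ioo_same hab]
      exact ⟨hx, fun h => hgap h hxE⟩
    · rintro (rfl | rfl)
      exacts [⟨ha, left_mem_Icc.2 hab⟩, ⟨hb, right_mem_Icc.2 hab⟩]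

theorem midSet_eq_setOf_inter_Icc_eq_pair (E : Set ℝ) :
    midSet E = {r : ℝ | ∃ ε > 0, E ∩ Icc (r - ε) (r + ε) = {r - ε, r + ε}} := by
  ext r
  constructor
  · rintro ⟨a, b, hab, ha, hb, hgap, rfl⟩
    refine ⟨(b - a) / 2, by linarith, ?_⟩
    rw [show (a + b) / 2 - (b - a) / 2 = a by ring, show (a + b) / 2 + (b - a) / 2 = b by ring]
    exact (inter_Icc_eq_pair_iff hab.le).2 ⟨ha, hb, hgap⟩
  · rintro ⟨ε, hε, h⟩
    obtain ⟨ha, hb, hgap⟩ := (inter_Icc_eq_pair_iff (by linarith)).1 h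
    exact ⟨r - ε, r + ε, by linarith, ha, hb, hgap, by ring⟩

lemma eq_of_mem_midSet_of_mem_Ioo {a b m : ℝ} (ha : a ∈ E) (hb : b ∈ E) (hgap : Ioo a b ⊆ Eᶜ)
    (hm : m ∈ midSet E) (hmab : m ∈ Ioo a b) : m = (a + b) / 2 := by
  obtain ⟨a', b', hab', ha', hb', hgap', rfl⟩ := hm
  have h₁ : a' < (a' + b') / 2 := by linarith
  have h₂ : (a' + b') / 2 < b' := by linarith
  have haa' : a = a' := le_antisymm
    (not_lt.1 fun h => hgap' ⟨h, hmab.1.trans h₂⟩ ha) (not_lt.1 fun h => hgap ⟨h, h₁.trans hmab.2⟩ ha')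
  have hbb' : b = b' := le_antisymm
    (not_lt.1 fun h => hgap ⟨hmab.1.trans h₂, h⟩ hb') (not_lt.1 fun h => hgap' ⟨h₁.trans hmab.2, h⟩ hb)
  rw [haa', hbb']

lemma notMem_midSet_of_mem {x : ℝ} (hx : x ∈ E) : x ∉ midSet E := by
  rintro ⟨a, b, hab, -, -, hgap, rfl⟩
  exact hgap ⟨by linarith, by linarith⟩ hx

lemma exists_gap_of_mem_Ioo (hE : IsClosed E) {u v z : ℝ} (hu : u ∈ E) (hv : v ∈ E)
    (hz : z ∈ Ioo u v) (hzE : z ∉ E) :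
    ∃ a b, u ≤ a ∧ a < z ∧ z < b ∧ b ≤ v ∧ a ∈ E ∧ b ∈ E ∧ Ioo a b ⊆ Eᶜ := by
  have hA : IsCompact (E ∩ Icc u z) := isCompact_Icc.inter_left hE
  have hB : IsCompact (E ∩ Icc z v) := isCompact_Icc.inter_left hE
  have ha : sSup (E ∩ Icc u z) ∈ E ∩ Icc u z := hA.sSup_mem ⟨u, hu, le_rfl, hz.1.le⟩
  have hb : sInf (E ∩ Icc z v) ∈ E ∩ Icc z v := hB.sInf_mem ⟨v, hv, hz.2.le, le_rfl⟩
  refine ⟨_, _, ha.2.1, ha.2.2.lt_of_ne fun h => hzE (h ▸ ha.1),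
    hb.2.1.lt_of_ne' fun h => hzE (h ▸ hb.1), hb.2.2, ha.1, hb.1, ?_⟩
  rintro w ⟨haw, hwb⟩ hwE
  rcases le_total w z with h | h
  · exact haw.not_ge (le_csSup hA.bddAbove ⟨hwE, ha.2.1.trans haw.le, h⟩)
  · exact hwb.not_ge (csInf_le hB.bddBelow ⟨hwE, h, hwb.le.trans hb.2.2⟩)

lemma exists_mem_midSet_mem_Ioo (hE : IsClosed E) (hint : interior E = ∅) {u v : ℝ}
    (hu : u ∈ E) (hv : v ∈ E) (huv : u < v) : ∃ m ∈ midSet E, m ∈ Ioo u v := by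
  obtain ⟨z, hzE, hz⟩ := (interior_eq_empty_iff_dense_compl.1 hint).exists_between huv
  obtain ⟨a, b, hua, haz, hzb, hbv, ha, hb, hgap⟩ := exists_gap_of_mem_Ioo hE hu hv hz hzE
  exact ⟨(a + b) / 2, ⟨a, b, haz.trans hzb, ha, hb, hgap, rfl⟩, by linarith, by linarith⟩

lemma subset_closure_midSet (hE : IsClosed E) (hint : interior E = ∅)
    (hacc : ∀ x ∈ E, AccPt x (Filter.principal E)) : E ⊆ closure (midSet E) := by
  intro x hx
  refine Metric.mem_closure_iff.2 fun ε hε => ?_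
  obtain ⟨y, ⟨hyx, hy⟩, hne⟩ := accPt_iff_nhds.1 (hacc x hx) _ (Metric.ball_mem_nhds x hε)
  rw [Metric.mem_ball, Real.dist_eq, abs_lt] at hyx
  obtain ⟨m, hm, hm₁, hm₂⟩ : ∃ m ∈ midSet E, m ∈ Ioo (min x y) (max x y) := by
    rcases hne.lt_or_gt with h | h
    · simpa [h.le] using exists_mem_midSet_mem_Ioo hE hint hy hx h
    · simpa [h.le] using exists_mem_midSet_mem_Ioo hE hint hx hy h
  refine ⟨m, hm, ?_⟩
  rw [Real.dist_eq, abs_lt]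
  constructor <;> cases min_cases x y <;> cases max_cases x y <;> linarith [hyx.1, hyx.2]

lemma closure_midSet_diff_subset (hE : IsClosed E) : closure (midSet E) \ midSet E ⊆ E := by
  rintro x ⟨hcl, hxM⟩
  by_contra hxE
  obtain ⟨δ, hδ, hball⟩ := Metric.isOpen_iff.1 hE.isOpen_compl x hxE
  obtain ⟨_, ⟨a, b, hab, ha, hb, hgap, rfl⟩, hdist⟩ := Metric.mem_closure_iff.1 hcl δ hδ
  rw [Real.dist_eq, abs_lt] at hdist
  -- the endpoints `a, b ∈ E` lie outside `ball x δ`, which meets `(a, b)`, so `x ∈ (a, b)`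
  have hx : x ∈ Ioo a b := by
    refine ⟨not_le.1 fun h => hball ?_ ha, not_le.1 fun h => hball ?_ hb⟩ <;>
      rw [Metric.mem_ball, Real.dist_eq, abs_lt] <;> constructor <;> linarith [hdist.1, hdist.2]
  have hne : x ≠ (a + b) / 2 := fun h => hxM (h ▸ ⟨a, b, hab, ha, hb, hgap, rfl⟩)
  obtain ⟨m, ⟨hm, hmne⟩, hmM⟩ :=
    mem_closure_iff.1 hcl _ (isOpen_Ioo.inter isOpen_compl_singleton) ⟨hx, hne⟩
  exact hmne (eq_of_mem_midSet_of_mem_Ioo ha hb hgap hmM hm)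

/-- for a Cantor set `E`, the set `M` of midpoints of the bounded
complementary intervals satisfies
`M = {r | ∃ ε > 0, E ∩ [r−ε, r+ε] = {r−ε, r+ε}}` and `E = Cl(M) \ M`. -/
theorem stmt8 (E : Set ℝ) (hE : IsCantorSet E) :
    midSet E = {r : ℝ | ∃ ε > 0, E ∩ Set.Icc (r - ε) (r + ε) = {r - ε, r + ε}} ∧
    E = closure (midSet E) \ midSet E := by
  obtain ⟨-, hcompact, hint, hacc⟩ := hE
  refine ⟨midSet_eq_setOf_inter_Icc_eq_pair E,
    subset_antisymm ?_ (closure_midSet_diff_subset hcompact.isClosed)⟩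
  exact fun x hx => ⟨subset_closure_midSet hcompact.isClosed hint hacc hx, notMem_midSet_of_mem hx⟩
end

section
/- Let E ⊆ ℝ be a Cantor set, A the set of left endpoints of the bounded connected components of ℝ \ E. Then A ⊆ E, Cl(A) = E, Cl(E \ A) = E, and A has no locally closed points (i.e., A has empty interior in its closure). -/
/-- The set of left endpoints of the bounded connected components of `ℝ \ E`. -/
def leftEndpoints (E : Set ℝ) : Set ℝ :=
  {a : ℝ | ∃ b : ℝ, a < b ∧ a ∈ E ∧ b ∈ E ∧ Set.Ioo a b ⊆ Eᶜ}

/-!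
A left endpoint `a` of a gap `(a, b)` of `E` is isolated from the right in `E`, so the set `A` of
left endpoints is countable. It is dense in `E`: between two nearby points of `E` lies a
point of the complement (`E` has empty interior), and the largest point of `E` below it is a
left endpoint. On the other hand a nonempty perfect set in a complete metric space is
uncountable, so no relatively open piece of `E` is exhausted by a countable set; hence `E` minus
the left endpoints is dense in `E` too, and no point of `closure A = E` has a neighbourhood
inside `A`.
-/

open Set Filter Topology

theorem Perfect.not_countable {α : Type*} [MetricSpace α] [CompleteSpace α] {C : Set α}
    (hC : Perfect C) (hne : C.Nonempty) : ¬C.Countable := by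
  have : Uncountable (ℕ → Bool) := by
    rw [← Cardinal.aleph0_lt_mk_iff]
    simpa using Cardinal.aleph0_lt_continuum
  obtain ⟨f, hfC, -, hf⟩ := hC.exists_nat_bool_injection hne
  intro hcount
  exact not_countable_univ <|
    MapsTo.countable_of_injOn (fun x _ => hfC (mem_range_self x)) hf.injOn hcount

theorem Perfect.subset_closure_diff_of_countable {α : Type*} [MetricSpace α] [CompleteSpace α]
    {E A : Set α} (hE : Perfect E) (hA : A.Countable) : E ⊆ closure (E \ A) := by
  intro x hx
  rw [mem_closure_iff_nhds_basis (closed_nhds_basis x)]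
  rintro t ⟨ht, htc⟩
  by_contra! hdiff
  have htA : t ∩ E ⊆ A := fun y ⟨hyt, hyE⟩ => by_contra fun hyA => hdiff y ⟨hyE, hyA⟩ hyt
  obtain ⟨hperf, hne⟩ :=
    hE.closure_nhds_inter x hx (mem_interior_iff_mem_nhds.2 ht) isOpen_interior
  have hsub : closure (interior t ∩ E) ⊆ A :=
    (closure_minimal (inter_subset_inter_left E interior_subset) (htc.inter hE.closed)).trans htA
  exact hperf.not_countable hne (hA.mono hsub)

theorem eq_empty_of_inter_closure_subset {X : Type*} [TopologicalSpace X] {A U : Set X}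
    (hA : closure A ⊆ closure (closure A \ A)) (hU : IsOpen U) (hUA : U ∩ closure A ⊆ A) :
    U ∩ closure A = ∅ := by
  refine eq_empty_of_forall_notMem fun x ⟨hxU, hxA⟩ => ?_
  obtain ⟨y, hyU, hyA, hynA⟩ := mem_closure_iff.1 (hA hxA) U hU hxU
  exact hynA (hUA ⟨hyU, hyA⟩)

theorem leftEndpoints_subset (E : Set ℝ) : leftEndpoints E ⊆ E :=
  fun _ ⟨_, _, ha, _⟩ => ha

theorem leftEndpoints_subset_isolated_right (E : Set ℝ) :
    leftEndpoints E ⊆ {x ∈ E | 𝓝[E ∩ Ioi x] x = ⊥} := by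
  rintro a ⟨b, hab, haE, -, hgap⟩
  refine ⟨haE, empty_mem_iff_bot.1 <| mem_nhdsWithin.2 ⟨Iio b, isOpen_Iio, hab, ?_⟩⟩
  rintro y ⟨hyb, hyE, hay⟩
  exact hgap ⟨hay, hyb⟩ hyE

theorem countable_leftEndpoints (E : Set ℝ) : (leftEndpoints E).Countable :=
  countable_setOfPred_isolated_right_within.mono (leftEndpoints_subset_isolated_right E)

section leftEndpoints

variable {E : Set ℝ}

theorem exists_mem_leftEndpoints_Ico (hE : IsClosed E) {x y z : ℝ} (hx : x ∈ E) (hz : z ∈ E)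
    (hy : y ∈ Ioo x z) (hyE : y ∉ E) : ∃ a ∈ leftEndpoints E, a ∈ Ico x y := by
  obtain ⟨a, ⟨haE, hxa, hay⟩, ha_max⟩ :=
    (isCompact_Icc.inter_left hE).exists_isGreatest ⟨x, hx, le_rfl, hy.1.le⟩
  obtain ⟨b, ⟨hbE, hyb, hbz⟩, hb_min⟩ :=
    (isCompact_Icc.inter_left hE).exists_isLeast ⟨z, hz, hy.2.le, le_rfl⟩
  have hay : a < y := hay.lt_of_ne fun h => hyE (h ▸ haE)
  have hyb : y < b := hyb.lt_of_ne fun h => hyE (h ▸ hbE)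
  refine ⟨a, ⟨b, hay.trans hyb, haE, hbE, fun t ⟨hat, htb⟩ htE => ?_⟩, hxa, hay⟩
  rcases le_or_gt t y with hty | hyt
  · exact hat.not_ge (ha_max ⟨htE, hxa.trans hat.le, hty⟩)
  · exact htb.not_ge (hb_min ⟨htE, hyt.le, htb.le.trans hbz⟩)

theorem exists_mem_leftEndpoints_uIcc (hE : IsClosed E) (hint : interior E = ∅) {x z : ℝ}
    (hx : x ∈ E) (hz : z ∈ E) (hxz : x ≠ z) : ∃ a ∈ leftEndpoints E, a ∈ uIcc x z := by
  wlog hlt : x < z generalizing x z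
  · rw [uIcc_comm]
    exact this hz hx hxz.symm (hxz.symm.lt_of_le (not_lt.1 hlt))
  obtain ⟨y, hyE, hy⟩ := (interior_eq_empty_iff_dense_compl.1 hint).exists_between hlt
  obtain ⟨a, ha, hxa, hay⟩ := exists_mem_leftEndpoints_Ico hE hx hz hy hyE
  exact ⟨a, ha, uIcc_of_le hlt.le ▸ ⟨hxa, hay.le.trans hy.2.le⟩⟩

theorem IsCantorSet.subset_closure_leftEndpoints (hE : IsCantorSet E) :
    E ⊆ closure (leftEndpoints E) := by
  obtain ⟨-, hcomp, hint, hacc⟩ := hE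
  intro x hx
  rw [Metric.mem_closure_iff]
  intro ε hε
  obtain ⟨z, ⟨hzε, hzE⟩, hzx⟩ := accPt_iff_nhds.1 (hacc x hx) _ (Metric.ball_mem_nhds x hε)
  obtain ⟨a, ha, hxza⟩ := exists_mem_leftEndpoints_uIcc hcomp.isClosed hint hx hzE hzx.symm
  have hball : (Metric.ball x ε).OrdConnected := by
    rw [Real.ball_eq_Ioo]
    exact ordConnected_Ioo
  exact ⟨a, ha, dist_comm x a ▸ hball.uIcc_subset (Metric.mem_ball_self hε) hzε hxza⟩

theorem IsCantorSet.closure_leftEndpoints (hE : IsCantorSet E) :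
    closure (leftEndpoints E) = E :=
  (closure_minimal (leftEndpoints_subset E) hE.2.1.isClosed).antisymm
    hE.subset_closure_leftEndpoints

theorem IsCantorSet.closure_diff_leftEndpoints (hE : IsCantorSet E) :
    closure (E \ leftEndpoints E) = E :=
  (closure_minimal sdiff_subset hE.2.1.isClosed).antisymm <|
    Perfect.subset_closure_diff_of_countable ⟨hE.2.1.isClosed, hE.2.2.2⟩
      (countable_leftEndpoints E)

end leftEndpoints

/-- for a Cantor set `E` and `A` the set of left endpoints of the bounded
complementary intervals: `A ⊆ E`, `Cl(A) = E`, `Cl(E \ A) = E`, and `A` has empty interior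
in its closure (no locally closed points). -/
theorem stmt9 (E : Set ℝ) (hE : IsCantorSet E) :
    leftEndpoints E ⊆ E ∧
    closure (leftEndpoints E) = E ∧
    closure (E \ leftEndpoints E) = E ∧
    ∀ U : Set ℝ, IsOpen U → U ∩ closure (leftEndpoints E) ⊆ leftEndpoints E →
      U ∩ closure (leftEndpoints E) = ∅ := by
  have hclA := hE.closure_leftEndpoints
  have hclD := hE.closure_diff_leftEndpoints
  refine ⟨leftEndpoints_subset E, hclA, hclD, fun U hU hUA => ?_⟩
  exact eq_empty_of_inter_closure_subset (by rw [hclA, hclD]) hU hUA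
end

section
/- Let (r_k) be positive reals with 2r_{k+1} < r_k, and suppose r_k / ψ_{m+1}(r_{k−1}) → 0 as k → ∞ for every m, where ψ_j is the j-th iterate of ψ(t)=e^{−1/t} near 0. Let E = ⋂ E_k be the associated Cantor set (keeping the two end subintervals of length r_{k+1} in each component of length r_k). Then for every m ∈ ℕ, r · exp_m(N(E,r)) → 0 as r → 0⁺, where exp_m is the m-th iterate of exp and N(E,r) is the covering number by intervals of length r. -/
/-- The function `ψ : [0,∞) → ℝ`, extended by `0` on `(-∞,0]`:
`ψ(0) = 0`, `ψ(t) = e^{-1/t}` for `0 < t < 1`, `ψ(t) = t - 1 + e^{-1}` for `t ≥ 1`. -/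
noncomputable def psi (t : ℝ) : ℝ :=
  if t ≤ 0 then 0 else if t < 1 then Real.exp (-1 / t) else t - 1 + Real.exp (-1)

/-- The left endpoints of the connected components of the `k`-th stage `E_k` of the
construction: at each step, the component `[c, c + r_i]` is replaced by its two end
subintervals `[c, c + r_{i+1}]` and `[c + r_i - r_{i+1}, c + r_i]`. -/
def leftPt (r : ℕ → ℝ) {k : ℕ} (s : Fin k → Bool) : ℝ :=
  ∑ i : Fin k, (if s i then r i - r (i + 1) else 0)

/-- The `k`-th stage `E_k`: the union of `2^k` closed intervals of length `r k`
(`E_0 = [0,1]` when `r 0 = 1`). -/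
def stageE (r : ℕ → ℝ) (k : ℕ) : Set ℝ :=
  ⋃ s : Fin k → Bool, Set.Icc (leftPt r s) (leftPt r s + r k)

/-- The resulting set `E = ⋂ₖ E_k`. -/
def cantorE (r : ℕ → ℝ) : Set ℝ := ⋂ k, stageE r k

/-- The minimal number of closed intervals of length `ρ` needed to cover `A ⊆ ℝ`
(`⊤` if no finite cover exists). -/
noncomputable def coverNum1 (A : Set ℝ) (ρ : ℝ) : ℕ∞ :=
  sInf {k : ℕ∞ | ∃ s : Finset ℝ, (s.card : ℕ∞) = k ∧ A ⊆ ⋃ c ∈ s, Set.Icc c (c + ρ)}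

/-!
If `r (k + 1) ≤ ρ < r k`, the `2 ^ (k + 1)` intervals of `E_{k+1}` have length `≤ ρ`, so
`ρ · exp_m (N(E, ρ)) ≤ r k · exp_m (2 ^ (k + 1))`, and it suffices that this tends to `0`.
Since `r j ≤ 2⁻ʲ`, we have `2 ^ (j + 2) ≤ 4 · 2 ^ j ≤ exp (1 / r j)`; and inversion conjugates
`ψ` on `(0, 1)` to `exp`, so `exp_m (exp (1 / r j)) = 1 / ψ_{m+1} (r j)`. Hence
`r (j + 1) · exp_m (2 ^ (j + 2)) ≤ r (j + 1) / ψ_{m+1} (r j) → 0`.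
-/

open Real Set Filter Topology

lemma psi_of_mem_Ioo {t : ℝ} (ht : t ∈ Ioo 0 1) : psi t = exp (-t⁻¹) := by
  rw [psi, if_neg (not_le.2 ht.1), if_pos ht.2, neg_div, one_div]

lemma psi_mapsTo_Ioo : MapsTo psi (Ioo 0 1) (Ioo 0 1) := fun t ht => by
  rw [psi_of_mem_Ioo ht]
  exact ⟨exp_pos _, exp_lt_one_iff.2 (neg_lt_zero.2 (inv_pos.2 ht.1))⟩

lemma inv_psi_iterate {t : ℝ} (ht : t ∈ Ioo 0 1) (j : ℕ) :
    (psi^[j] t)⁻¹ = exp^[j] t⁻¹ := by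
  induction j with
  | zero => rfl
  | succ j ih =>
    rw [Function.iterate_succ_apply', Function.iterate_succ_apply', ← ih,
      psi_of_mem_Ioo (psi_mapsTo_Ioo.iterate j ht), exp_neg, inv_inv]

lemma exp_iterate_le_inv_psi_iterate {t x : ℝ} (ht : t ∈ Ioo 0 1) (hx : x ≤ exp t⁻¹) (m : ℕ) :
    exp^[m] x ≤ (psi^[m + 1] t)⁻¹ := by
  rw [inv_psi_iterate ht, Function.iterate_succ_apply]
  exact exp_monotone.iterate m hx

lemma exp_iterate_nonneg {x : ℝ} (hx : 0 ≤ x) : ∀ m : ℕ, 0 ≤ exp^[m] x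
  | 0 => hx
  | m + 1 => by rw [Function.iterate_succ_apply']; exact (exp_pos _).le

lemma four_mul_le_exp {x : ℝ} (hx : 4 ≤ x) : 4 * x ≤ exp x :=
  calc 4 * x ≤ (x / 4 + 1) ^ 4 := by nlinarith [sq_nonneg (x / 4 - 1), sq_nonneg (x / 4 + 1)]
    _ ≤ exp (x / 4) ^ 4 := by gcongr; exact add_one_le_exp _
    _ = exp x := by rw [← exp_nat_mul]; ring_nf

lemma le_mul_inv_two_pow {r : ℕ → ℝ} (hhalf : ∀ k, 2 * r (k + 1) ≤ r k) (k : ℕ) :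
    r k ≤ r 0 * 2⁻¹ ^ k := by
  induction k with
  | zero => simp
  | succ k ih => rw [pow_succ, ← mul_assoc]; linarith [hhalf k]

lemma toNat_coverNum1_cantorE_le_two_pow {r : ℕ → ℝ} {ρ : ℝ} {n : ℕ} (h : r n ≤ ρ) :
    (coverNum1 (cantorE r) ρ).toNat ≤ 2 ^ n := by
  classical
  let s : Finset ℝ := Finset.univ.image (leftPt r (k := n))
  have hcover : cantorE r ⊆ ⋃ c ∈ s, Icc c (c + ρ) := fun x hx => by
    obtain ⟨f, hf⟩ := mem_iUnion.1 (mem_iInter.1 hx n)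
    exact mem_biUnion (Finset.mem_image_of_mem _ (Finset.mem_univ f))
      ⟨hf.1, hf.2.trans (by linarith)⟩
  have hcard : s.card ≤ 2 ^ n := Finset.card_image_le.trans (by simp)
  exact ENat.toNat_le_of_le_natCast <|
    (sInf_le ⟨s, rfl, hcover⟩ : coverNum1 (cantorE r) ρ ≤ s.card).trans (Nat.cast_le.2 hcard)

lemma exists_bracket_of_antitone {r : ℕ → ℝ} (hr : Antitone r) (hr0 : Tendsto r atTop (𝓝 0))
    {K : ℕ} {ρ : ℝ} (hρ0 : 0 < ρ) (hρ : ρ < r K) :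
    ∃ k ≥ K, r (k + 1) ≤ ρ ∧ ρ < r k := by
  classical
  have hex : ∃ n, r n ≤ ρ := ((hr0.eventually (ge_mem_nhds hρ0)).exists)
  have hK : K < Nat.find hex := by
    by_contra! h
    exact (Nat.find_spec hex |>.trans_lt hρ).not_ge (hr h)
  obtain ⟨k, hk⟩ : ∃ k, Nat.find hex = k + 1 := ⟨Nat.find hex - 1, by omega⟩
  refine ⟨k, by omega, hk ▸ Nat.find_spec hex, ?_⟩
  exact not_le.1 (Nat.find_min hex (by omega))

lemma tendsto_nhdsGT_zero_of_bracket {r a : ℕ → ℝ} {f : ℝ → ℝ} (hr : Antitone r)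
    (hpos : ∀ k, 0 < r k) (hr0 : Tendsto r atTop (𝓝 0)) (ha : Tendsto a atTop (𝓝 0))
    (hf0 : ∀ ρ > 0, 0 ≤ f ρ) (hfa : ∀ k ρ, r (k + 1) ≤ ρ → ρ < r k → f ρ ≤ a k) :
    Tendsto f (𝓝[>] 0) (𝓝 0) := by
  refine tendsto_order.2 ⟨fun ε hε => eventually_nhdsWithin_of_forall fun ρ hρ =>
    hε.trans_le (hf0 ρ hρ), fun ε hε => ?_⟩
  obtain ⟨K, hK⟩ := eventually_atTop.1 (ha.eventually (gt_mem_nhds hε))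
  filter_upwards [Ioo_mem_nhdsGT (hpos K)] with ρ hρ
  obtain ⟨k, hkK, hk1, hk⟩ := exists_bracket_of_antitone hr hr0 hρ.1 hρ.2
  exact (hfa k ρ hk1 hk).trans_lt (hK k hkK)

lemma tendsto_mul_exp_iterate_two_pow {r : ℕ → ℝ} {m : ℕ} (hpos : ∀ k, 0 < r k)
    (hgeom : ∀ k, r k ≤ 2⁻¹ ^ k)
    (hfast : Tendsto (fun k => r (k + 1) / psi^[m + 1] (r k)) atTop (𝓝 0)) :
    Tendsto (fun k => r k * exp^[m] (2 ^ (k + 1))) atTop (𝓝 0) := by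
  rw [← tendsto_add_atTop_iff_nat 1]
  refine squeeze_zero' (Eventually.of_forall fun k =>
    mul_nonneg (hpos _).le (exp_iterate_nonneg (by positivity) m)) ?_ hfast
  filter_upwards [eventually_ge_atTop 2] with j hj
  have hmem : r j ∈ Ioo 0 1 :=
    ⟨hpos j, (hgeom j).trans_lt (pow_lt_one₀ (by norm_num) (by norm_num) (by omega))⟩
  have hx : (2 : ℝ) ^ (j + 1 + 1) ≤ exp (r j)⁻¹ :=
    calc (2 : ℝ) ^ (j + 1 + 1) = 4 * 2 ^ j := by ring
      _ ≤ exp (2 ^ j) := four_mul_le_exp (by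
          calc (4 : ℝ) = 2 ^ 2 := by norm_num
            _ ≤ 2 ^ j := pow_le_pow_right₀ one_le_two hj)
      _ ≤ exp (r j)⁻¹ := exp_le_exp.2 <| by
          rw [le_inv_comm₀ (by positivity) (hpos j), ← inv_pow]; exact hgeom j
  calc r (j + 1) * exp^[m] (2 ^ (j + 1 + 1)) ≤ r (j + 1) * (psi^[m + 1] (r j))⁻¹ :=
        mul_le_mul_of_nonneg_left (exp_iterate_le_inv_psi_iterate hmem hx m) (hpos _).le
    _ = r (j + 1) / psi^[m + 1] (r j) := (div_eq_mul_inv _ _).symm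

/-- with the standard construction and the hypothesis
`r_{k+1}/ψ_{m+1}(r_k) → 0` for all `m`, the resulting Cantor set `E` satisfies
`ρ · exp_m(N(E,ρ)) → 0` as `ρ → 0⁺` for every `m`. -/
theorem stmt14 (r : ℕ → ℝ) (h0 : r 0 = 1) (hpos : ∀ k, 0 < r k)
    (hhalf : ∀ k, 2 * r (k + 1) < r k)
    (hfast : ∀ m : ℕ, Filter.Tendsto (fun k => r (k + 1) / psi^[m + 1] (r k))
      Filter.atTop (nhds 0)) :
    ∀ m : ℕ, Filter.Tendsto
      (fun ρ : ℝ => ρ * Real.exp^[m] (((coverNum1 (cantorE r) ρ).toNat : ℝ)))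
      (nhdsWithin 0 (Set.Ioi 0)) (nhds 0) := by
  intro m
  have hanti : Antitone r := antitone_nat_of_succ_le fun k => by linarith [hhalf k, hpos (k + 1)]
  have hgeom (k : ℕ) : r k ≤ 2⁻¹ ^ k := by
    simpa [h0] using le_mul_inv_two_pow (fun k => (hhalf k).le) k
  have hr0 : Tendsto r atTop (𝓝 0) := squeeze_zero (fun k => (hpos k).le) hgeom
    (tendsto_pow_atTop_nhds_zero_of_lt_one (by norm_num) (by norm_num))
  refine tendsto_nhdsGT_zero_of_bracket hanti hpos hr0
    (tendsto_mul_exp_iterate_two_pow hpos hgeom (hfast m))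
    (fun ρ hρ => mul_nonneg hρ.le (exp_iterate_nonneg (Nat.cast_nonneg _) m))
    fun k ρ hk1 hk => ?_
  have hN : ((coverNum1 (cantorE r) ρ).toNat : ℝ) ≤ 2 ^ (k + 1) := by
    exact_mod_cast toNat_coverNum1_cantorE_le_two_pow hk1
  calc ρ * exp^[m] (coverNum1 (cantorE r) ρ).toNat
      ≤ r k * exp^[m] (coverNum1 (cantorE r) ρ).toNat :=
        mul_le_mul_of_nonneg_right hk.le (exp_iterate_nonneg (Nat.cast_nonneg _) m)
    _ ≤ r k * exp^[m] (2 ^ (k + 1)) :=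
        mul_le_mul_of_nonneg_left (exp_monotone.iterate m hN) (hpos k).le
end

section
/- Let D ⊆ ℝⁿ be open, z ∈ Cl(D), and suppose D is locally connected at z (for every open neighborhood U of z there is an open neighborhood V ⊆ U of z with V ∩ D connected). Let g, h : D ∪ {z} → ℝ be continuous with g < h on D and g(z) < h(z), and set C = {(x,t) : x ∈ D, g(x) < t < h(x)}. Then for every r with g(z) < r < h(z), the set C is locally connected at the point (z, r), i.e., every open neighborhood of (z,r) contains an open neighborhood V of (z,r) such that V ∩ C is connected. -/
/-!
Near `(z, r)` the region between the graphs of `g` and `h` looks like a product: by continuity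
at `z` there are `g z < a < r < b < h z` and a neighbourhood `W` of `z` on which `g < a` and
`b < h`, so over `W ∩ D` the region contains the whole slab `(a, b)`. Inside any open box around
`(z, r)` one therefore finds `V ×ˢ (a, b)` with `V ⊆ W` open and `V ∩ D` preconnected, and its
trace on the region is the preconnected product `(V ∩ D) ×ˢ (a, b)`.
-/

open Set Filter Topology

theorem exists_Ioo_subset_of_mem_nhds_of_lt {α : Type*} [LinearOrder α] [DenselyOrdered α]
    [TopologicalSpace α] [OrderTopology α] {t : Set α} {r c d : α} (ht : t ∈ 𝓝 r)
    (hc : c < r) (hd : r < d) : ∃ a b, c < a ∧ a < r ∧ r < b ∧ b < d ∧ Ioo a b ⊆ t := by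
  obtain ⟨l, u, ⟨hl, hu⟩, hlu⟩ := (mem_nhds_iff_exists_Ioo_subset' ⟨c, hc⟩ ⟨d, hd⟩).1 ht
  obtain ⟨a, hca, har⟩ := exists_between (max_lt hl hc)
  obtain ⟨b, hrb, hbd⟩ := exists_between (lt_min hu hd)
  exact ⟨a, b, (le_max_right l c).trans_lt hca, har, hrb, hbd.trans_le (min_le_right u d),
    (Ioo_subset_Ioo ((le_max_left l c).trans hca.le) (hbd.le.trans (min_le_left u d))).trans hlu⟩

theorem prod_Ioo_inter_regionBetween {X : Type*} {g h : X → ℝ} {D V : Set X} {a b : ℝ}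
    (hg : ∀ x ∈ V ∩ D, g x ≤ a) (hh : ∀ x ∈ V ∩ D, b ≤ h x) :
    V ×ˢ Ioo a b ∩ regionBetween g h D = (V ∩ D) ×ˢ Ioo a b := by
  ext ⟨x, u⟩
  simp only [regionBetween, mem_inter_iff, mem_prod, mem_Ioo, mem_ofPred_eq]
  constructor
  · rintro ⟨⟨hxV, hu⟩, hxD, -⟩
    exact ⟨⟨hxV, hxD⟩, hu⟩
  · rintro ⟨hx, hau, hub⟩
    exact ⟨⟨hx.1, hau, hub⟩, hx.2, (hg x hx).trans_lt hau, hub.trans_le (hh x hx)⟩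

variable {X : Type*} [TopologicalSpace X]

def IsLocallyPreconnectedAt (A : Set X) (x : X) : Prop :=
  ∀ U : Set X, IsOpen U → x ∈ U → ∃ V : Set X, IsOpen V ∧ x ∈ V ∧ V ⊆ U ∧ IsPreconnected (V ∩ A)

theorem IsLocallyPreconnectedAt.regionBetween {D : Set X} {z : X}
    (hD : IsLocallyPreconnectedAt D z) {g h : X → ℝ} (hg : ContinuousWithinAt g D z)
    (hh : ContinuousWithinAt h D z) {r : ℝ} (hgr : g z < r) (hrh : r < h z) :
    IsLocallyPreconnectedAt (regionBetween g h D) (z, r) := by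
  intro U hU hzr
  obtain ⟨s, t, hs, hzs, ht, hrt, hst⟩ := mem_nhds_prod_iff'.1 (hU.mem_nhds hzr)
  obtain ⟨a, b, hga, har, hrb, hbh, hab⟩ :=
    exists_Ioo_subset_of_mem_nhds_of_lt (ht.mem_nhds hrt) hgr hrh
  obtain ⟨W, hW, hzW, hWD⟩ := mem_nhdsWithin.1
    ((hg.eventually_lt_const hga).and (hh.eventually_const_lt hbh))
  obtain ⟨V, hV, hzV, hVWs, hVD⟩ := hD (W ∩ s) (hW.inter hs) ⟨hzW, hzs⟩
  have hbounds : ∀ x ∈ V ∩ D, g x < a ∧ b < h x := fun x hx => hWD ⟨(hVWs hx.1).1, hx.2⟩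
  refine ⟨V ×ˢ Ioo a b, hV.prod isOpen_Ioo, ⟨hzV, har, hrb⟩,
    (prod_mono (hVWs.trans inter_subset_right) hab).trans hst, ?_⟩
  rw [prod_Ioo_inter_regionBetween (fun x hx => (hbounds x hx).1.le)
    (fun x hx => (hbounds x hx).2.le)]
  exact hVD.prod isPreconnected_Ioo

theorem stmt18_general (n : ℕ) (D : Set (Fin n → ℝ)) (z : Fin n → ℝ)
    (hlc : ∀ U : Set (Fin n → ℝ), IsOpen U → z ∈ U →
      ∃ V : Set (Fin n → ℝ), IsOpen V ∧ z ∈ V ∧ V ⊆ U ∧ IsPreconnected (V ∩ D))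
    (g h : (Fin n → ℝ) → ℝ) (hg : ContinuousOn g (D ∪ {z}))
    (hh : ContinuousOn h (D ∪ {z}))
    (r : ℝ) (hr1 : g z < r) (hr2 : r < h z) :
    ∀ U : Set ((Fin n → ℝ) × ℝ), IsOpen U → (z, r) ∈ U →
      ∃ V : Set ((Fin n → ℝ) × ℝ), IsOpen V ∧ (z, r) ∈ V ∧ V ⊆ U ∧
        IsPreconnected (V ∩ {p : (Fin n → ℝ) × ℝ | p.1 ∈ D ∧ g p.1 < p.2 ∧ p.2 < h p.1}) :=
  have hz : z ∈ D ∪ {z} := Or.inr rfl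
  IsLocallyPreconnectedAt.regionBetween hlc ((hg z hz).mono subset_union_left)
    ((hh z hz).mono subset_union_left) hr1 hr2

/-- if `D ⊆ ℝⁿ` is open, `z ∈ Cl(D)`, `D` is locally connected at `z`,
`g, h` are continuous on `D ∪ {z}` with `g < h` on `D` and `g(z) < h(z)`, and
`C = {(x,t) : x ∈ D, g(x) < t < h(x)}`, then `C` is locally connected at `(z, r)`
for every `g(z) < r < h(z)`. -/
theorem stmt18 (n : ℕ) (D : Set (Fin n → ℝ)) (hD : IsOpen D) (z : Fin n → ℝ)
    (hz : z ∈ closure D)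
    (hlc : ∀ U : Set (Fin n → ℝ), IsOpen U → z ∈ U →
      ∃ V : Set (Fin n → ℝ), IsOpen V ∧ z ∈ V ∧ V ⊆ U ∧ IsPreconnected (V ∩ D))
    (g h : (Fin n → ℝ) → ℝ) (hg : ContinuousOn g (D ∪ {z}))
    (hh : ContinuousOn h (D ∪ {z})) (hgh : ∀ x ∈ D, g x < h x) (hghz : g z < h z)
    (r : ℝ) (hr1 : g z < r) (hr2 : r < h z) :
    ∀ U : Set ((Fin n → ℝ) × ℝ), IsOpen U → (z, r) ∈ U →
      ∃ V : Set ((Fin n → ℝ) × ℝ), IsOpen V ∧ (z, r) ∈ V ∧ V ⊆ U ∧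
        IsPreconnected (V ∩ {p : (Fin n → ℝ) × ℝ | p.1 ∈ D ∧ g p.1 < p.2 ∧ p.2 < h p.1}) :=
  stmt18_general n D z hlc g h hg hh r hr1 hr2
end
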